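/- arXiv:2002.11544 — 4 statements merged into one kernel-verified Lean document; each statement's English description precedes it below -/
import Mathlib

section
/- Fix α > 0, Δ > 0, ρ ∈ (0,1) and set L = log(ρ/(1−ρ)). Let m = 1, q = 1 + Δ/α, and b = (Δq/(2m)) L (the overlaps of the Hebbian plug-in estimator with optimally tuned bias), and let m_BO = q_BO = α/(Δ+α), b_BO = (Δ/2) L. Then the generalization-error expressions coincide: ρ Q((m+b)/√(Δq)) + (1−ρ) Q((m−b)/√(Δq)) = ρ Q((m_BO + b_BO)/√(Δ q_BO)) + (1−ρ) Q((m_BO − b_BO)/√(Δ q_BO)). In other words, the plug-in estimator achieves the Bayes-optimal error. -/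
open Real

/-- The Gaussian tail function `Q(x) = (1/√(2π)) ∫_x^∞ e^{−t²/2} dt`. -/
noncomputable def gaussQ (x : ℝ) : ℝ :=
  (Real.sqrt (2 * Real.pi))⁻¹ * ∫ t in Set.Ioi x, Real.exp (-t ^ 2 / 2)

/-- The Hebbian plug-in estimator with optimally tuned bias achieves the
Bayes-optimal generalization error. -/
theorem stmt4
    (α Δ ρ : ℝ) (hα : 0 < α) (hΔ : 0 < Δ) (hρ : ρ ∈ Set.Ioo (0:ℝ) 1)
    (L : ℝ) (hL : L = Real.log (ρ / (1 - ρ)))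
    (m q b : ℝ) (hm : m = 1) (hq : q = 1 + Δ / α) (hb : b = (Δ * q / (2 * m)) * L)
    (mBO qBO bBO : ℝ) (hmBO : mBO = α / (Δ + α)) (hqBO : qBO = α / (Δ + α))
    (hbBO : bBO = (Δ / 2) * L) :
    ρ * gaussQ ((m + b) / Real.sqrt (Δ * q)) + (1 - ρ) * gaussQ ((m - b) / Real.sqrt (Δ * q))
      = ρ * gaussQ ((mBO + bBO) / Real.sqrt (Δ * qBO))
        + (1 - ρ) * gaussQ ((mBO - bBO) / Real.sqrt (Δ * qBO)) := by
  have hαΔ : (0:ℝ) < Δ + α := by linarith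
  set c : ℝ := (Δ + α) / α with hc
  have hc0 : 0 < c := div_pos hαΔ hα
  have hsq : Δ * q = c ^ 2 * (Δ * qBO) := by
    rw [hq, hqBO, hc]; field_simp; ring
  have hsqrt : Real.sqrt (Δ * q) = c * Real.sqrt (Δ * qBO) := by
    rw [hsq, Real.sqrt_mul (by positivity), Real.sqrt_sq hc0.le]
  have hplus : m + b = c * (mBO + bBO) := by
    rw [hm, hb, hq, hmBO, hbBO, hm, hc]; field_simp; ring
  have hminus : m - b = c * (mBO - bBO) := by
    rw [hm, hb, hq, hmBO, hbBO, hm, hc]; field_simp; ring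
  rw [hsqrt, hplus, hminus, mul_div_mul_left _ _ hc0.ne', mul_div_mul_left _ _ hc0.ne']
end

section
/- Let ℓ̃: ℝ → ℝ be convex and continuously differentiable, let n, d ≥ 1, h ∈ ℝⁿ, and let c > 0 be a constant (playing the role of Δ_d(q − m²)). For γ > 0 let u_γ ∈ ℝⁿ be the unique solution of ℓ̃'(u_{γ,i}) + γ u_{γ,i} = h_i for each i (which exists since ℓ̃' is nondecreasing, provided u ↦ ℓ̃'(u) + γu is surjective). Suppose the supremum of F(u) = −√(c ‖u‖²/d) + ⟨u, h⟩/d − (1/d) Σ_{i=1}^n ℓ̃(u_i) over u ∈ ℝⁿ is attained at some u* ≠ 0. Then sup_{u∈ℝⁿ} F(u) = sup_{γ>0} F(u_γ); that is, the n-dimensional maximization reduces to a one-dimensional maximization over the Lagrange multiplier γ. -/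
open Real

/-- Lagrangian reduction of the auxiliary Gordon optimization: if the supremum of
`F(u) = −√(c‖u‖²/d) + ⟨u,h⟩/d − (1/d)Σᵢ ℓ̃(uᵢ)` over `u ∈ ℝⁿ` is attained at some `u* ≠ 0`,
then it equals the supremum over the Lagrange multiplier `γ > 0` of `F(u_γ)`, where `u_γ`
solves `ℓ̃'(u_{γ,i}) + γ u_{γ,i} = hᵢ` coordinatewise. -/
theorem stmt15
    (tl : ℝ → ℝ) (hconv : ConvexOn ℝ Set.univ tl) (hC1 : ContDiff ℝ 1 tl)
    (n d : ℕ) (hn : 1 ≤ n) (hd : 1 ≤ d)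
    (h : Fin n → ℝ) (c : ℝ) (hc : 0 < c)
    (hsurj : ∀ γ : ℝ, 0 < γ → Function.Surjective fun x : ℝ => deriv tl x + γ * x)
    (u : ℝ → Fin n → ℝ)
    (hu : ∀ γ : ℝ, 0 < γ → ∀ i, deriv tl (u γ i) + γ * u γ i = h i)
    (F : (Fin n → ℝ) → ℝ)
    (hF : ∀ w, F w = -Real.sqrt (c * (∑ i, (w i) ^ 2) / d)
      + (∑ i, w i * h i) / d - (1 / (d:ℝ)) * ∑ i, tl (w i))
    (ustar : Fin n → ℝ) (hustar : ustar ≠ 0)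
    (hmax : ∀ w, F w ≤ F ustar) :
    (⨆ w : Fin n → ℝ, F w) = ⨆ γ : Set.Ioi (0:ℝ), F (u γ) := by
  have hdiff : Differentiable ℝ tl := hC1.differentiable one_ne_zero
  have hdpos : (0:ℝ) < (d:ℝ) := by exact_mod_cast hd
  -- S = ‖ustar‖² > 0
  set S : ℝ := ∑ i, (ustar i) ^ 2 with hSdef
  have hSpos : 0 < S := by
    obtain ⟨i, hi⟩ : ∃ i, ustar i ≠ 0 := by
      by_contra hcon
      push_neg at hcon
      exact hustar (funext hcon)
    apply Finset.sum_pos' (fun j _ => sq_nonneg _)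
    exact ⟨i, Finset.mem_univ i, by positivity⟩
  set R : ℝ := Real.sqrt (c * S / d) with hRdef
  have hRpos : 0 < R := Real.sqrt_pos.2 (by positivity)
  set γs : ℝ := c / R with hγdef
  have hγpos : 0 < γs := by positivity
  -- first-order condition at ustar
  have key : ∀ i, deriv tl (ustar i) + γs * ustar i = h i := by
    intro i
    set A : ℝ := ∑ j ∈ Finset.univ.erase i, (ustar j) ^ 2 with hA
    set B : ℝ := ∑ j ∈ Finset.univ.erase i, ustar j * h j with hB
    set C : ℝ := ∑ j ∈ Finset.univ.erase i, tl (ustar j) with hC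
    have hSA : S = (ustar i) ^ 2 + A :=
      (Finset.add_sum_erase _ (fun j => (ustar j) ^ 2) (Finset.mem_univ i)).symm
    have hgform : ∀ t, F (Function.update ustar i t)
        = -Real.sqrt (c * (t ^ 2 + A) / d) + (t * h i + B) / d - (1 / (d:ℝ)) * (tl t + C) := by
      intro t
      have e1 : ∑ j, (Function.update ustar i t j) ^ 2 = t ^ 2 + A := by
        rw [hA, ← Finset.add_sum_erase _ (fun j => (Function.update ustar i t j) ^ 2)
          (Finset.mem_univ i), Function.update_self]
        congr 1
        exact Finset.sum_congr rfl fun j hj => by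
          rw [Function.update_of_ne (Finset.ne_of_mem_erase hj)]
      have e2 : ∑ j, Function.update ustar i t j * h j = t * h i + B := by
        rw [hB, ← Finset.add_sum_erase _ (fun j => Function.update ustar i t j * h j)
          (Finset.mem_univ i), Function.update_self]
        congr 1
        exact Finset.sum_congr rfl fun j hj => by
          rw [Function.update_of_ne (Finset.ne_of_mem_erase hj)]
      have e3 : ∑ j, tl (Function.update ustar i t j) = tl t + C := by
        rw [hC, ← Finset.add_sum_erase _ (fun j => tl (Function.update ustar i t j))
          (Finset.mem_univ i), Function.update_self]
        congr 1
        exact Finset.sum_congr rfl fun j hj => by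
          rw [Function.update_of_ne (Finset.ne_of_mem_erase hj)]
      rw [hF, e1, e2, e3]
    set x : ℝ := ustar i with hx
    have hinner : c * (x ^ 2 + A) / d = c * S / d := by rw [hSA]
    have hinnerne : c * (x ^ 2 + A) / d ≠ 0 := by
      rw [hinner]; positivity
    have hsq : HasDerivAt (fun t : ℝ => Real.sqrt (c * (t ^ 2 + A) / d))
        ((c * (2 * x) / d) / (2 * R)) x := by
      have h1 : HasDerivAt (fun t : ℝ => c * (t ^ 2 + A) / d) (c * (2 * x) / d) x := by
        have := (((hasDerivAt_pow 2 x).add_const A).const_mul c).div_const (d:ℝ)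
        simpa using this
      have := h1.sqrt hinnerne
      simpa [hinner, hRdef] using this
    have hg : HasDerivAt (fun t => F (Function.update ustar i t))
        (-(c * (2 * x) / d / (2 * R)) + h i / d - (1 / (d:ℝ)) * deriv tl x) x := by
      have h2 : HasDerivAt (fun t : ℝ => (t * h i + B) / d) (h i / d) x := by
        have := (((hasDerivAt_id x).mul_const (h i)).add_const B).div_const (d:ℝ)
        simpa using this
      have h3 : HasDerivAt (fun t : ℝ => (1 / (d:ℝ)) * (tl t + C)) ((1 / (d:ℝ)) * deriv tl x) x :=
        (((hdiff x).hasDerivAt).add_const C).const_mul _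
      have := (hsq.neg.add h2).sub h3
      exact this.congr_of_eventuallyEq (Filter.Eventually.of_forall fun t => hgform t)
    have hloc : IsLocalMax (fun t => F (Function.update ustar i t)) x := by
      apply Filter.Eventually.of_forall
      intro t
      simpa [hx, Function.update_eq_self] using hmax (Function.update ustar i t)
    have hzero := hloc.hasDerivAt_eq_zero hg
    have hRne : R ≠ 0 := ne_of_gt hRpos
    have hdne : (d:ℝ) ≠ 0 := ne_of_gt hdpos
    have e : -(c * (2 * x) / d / (2 * R)) + h i / d - (1 / (d:ℝ)) * deriv tl x
        = (h i - (deriv tl x + c / R * x)) / d := by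
      field_simp
      ring
    rw [e] at hzero
    have h0 := (div_eq_zero_iff.mp hzero).resolve_right hdne
    rw [hγdef]
    linarith
  -- uniqueness: strict monotonicity
  have hmono : Monotone (deriv tl) := by
    have := hconv.monotoneOn_deriv (fun x _ => hdiff x)
    exact fun a b hab => this (Set.mem_univ a) (Set.mem_univ b) hab
  have hstrict : StrictMono (fun x : ℝ => deriv tl x + γs * x) := fun a b hab =>
    add_lt_add_of_le_of_lt (hmono hab.le) (by nlinarith)
  have hueq : u γs = ustar := by
    funext i
    apply hstrict.injective
    show deriv tl (u γs i) + γs * u γs i = deriv tl (ustar i) + γs * ustar i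
    rw [hu γs hγpos i, key i]
  -- conclude
  have hbdd1 : BddAbove (Set.range F) := ⟨F ustar, Set.forall_mem_range.2 hmax⟩
  have h1 : (⨆ w : Fin n → ℝ, F w) = F ustar :=
    le_antisymm (ciSup_le hmax) (le_ciSup hbdd1 ustar)
  have hne : Nonempty (Set.Ioi (0:ℝ)) := ⟨⟨1, by norm_num⟩⟩
  have hbdd2 : BddAbove (Set.range fun γ : Set.Ioi (0:ℝ) => F (u γ)) :=
    ⟨F ustar, Set.forall_mem_range.2 fun γ => hmax _⟩
  have h2 : (⨆ γ : Set.Ioi (0:ℝ), F (u γ)) = F ustar := by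
    refine le_antisymm (ciSup_le fun γ => hmax _) ?_
    have := le_ciSup hbdd2 (⟨γs, hγpos⟩ : Set.Ioi (0:ℝ))
    rwa [hueq] at this
  rw [h1, h2]
end

section
/- In the setting of the Lagrangian reduction (ℓ̃: ℝ → ℝ convex, continuously differentiable, u ↦ ℓ̃'(u) + γu a bijection of ℝ for each γ > 0; h ∈ ℝⁿ; constants α = n/d > 0, Δ_d > 0, q > m²; u_γ ∈ ℝⁿ the solution of ℓ̃'(u_{γ,i}) + γ u_{γ,i} = h_i), suppose γ* > 0 satisfies α γ*² ‖u_{γ*}‖²/n = Δ_d (q − m²) and γ* maximizes γ ↦ −√(Δ_d(q−m²)‖u_γ‖²/d) + ⟨u_γ, h⟩/d − (1/d)Σ ℓ̃(u_{γ,i}). Then the maximal value satisfies: max_{γ>0} [−√(Δ_d(q−m²)‖u_γ‖²/d) + ⟨u_γ, h⟩/d − (1/d)Σ_i ℓ̃(u_{γ,i})] = (1/d) Σ_{i=1}^n [u_{γ*,i} ℓ̃'(u_{γ*,i}) − ℓ̃(u_{γ*,i})]. -/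
open Real

/-- Evaluation of the reduced one-dimensional Gordon problem at its optimizer: if `γ* > 0`
satisfies the fixed-point equation `αγ*²‖u_{γ*}‖²/n = Δ_d(q − m²)` and maximizes the reduced
objective, then the maximal value equals `(1/d) Σᵢ [u_{γ*,i} ℓ̃'(u_{γ*,i}) − ℓ̃(u_{γ*,i})]`. -/
theorem stmt16
    (tl : ℝ → ℝ) (hconv : ConvexOn ℝ Set.univ tl) (hC1 : ContDiff ℝ 1 tl)
    (n d : ℕ) (hn : 1 ≤ n) (hd : 1 ≤ d)
    (hbij : ∀ γ : ℝ, 0 < γ → Function.Bijective fun x : ℝ => deriv tl x + γ * x)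
    (h : Fin n → ℝ) (α Δd q m : ℝ)
    (hα : α = (n:ℝ) / d) (hΔd : 0 < Δd) (hqm : m ^ 2 < q)
    (u : ℝ → Fin n → ℝ)
    (hu : ∀ γ : ℝ, 0 < γ → ∀ i, deriv tl (u γ i) + γ * u γ i = h i)
    (G : ℝ → ℝ)
    (hG : ∀ γ, G γ = -Real.sqrt (Δd * (q - m ^ 2) * (∑ i, (u γ i) ^ 2) / d)
      + (∑ i, u γ i * h i) / d - (1 / (d:ℝ)) * ∑ i, tl (u γ i))
    (γstar : ℝ) (hγstar : 0 < γstar)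
    (hfix : α * γstar ^ 2 * (∑ i, (u γstar i) ^ 2) / n = Δd * (q - m ^ 2))
    (hmax : ∀ γ : ℝ, 0 < γ → G γ ≤ G γstar) :
    (⨆ γ : Set.Ioi (0:ℝ), G γ)
      = (1 / (d:ℝ)) * ∑ i, (u γstar i * deriv tl (u γstar i) - tl (u γstar i)) := by
  haveI : Nonempty (Set.Ioi (0:ℝ)) := ⟨⟨γstar, hγstar⟩⟩
  have hd0 : (0:ℝ) < d := by exact_mod_cast hd
  have hn0 : (0:ℝ) < n := by exact_mod_cast hn
  have hsup : (⨆ γ : Set.Ioi (0:ℝ), G γ) = G γstar := by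
    have hbdd : BddAbove (Set.range fun γ : Set.Ioi (0:ℝ) => G γ) := by
      refine ⟨G γstar, ?_⟩
      rintro x ⟨γ, rfl⟩
      exact hmax γ.1 γ.2
    apply le_antisymm
    · refine ciSup_le fun γ => ?_
      exact hmax γ.1 γ.2
    · exact le_ciSup hbdd ⟨γstar, hγstar⟩
  rw [hsup, hG]
  set S := ∑ i, (u γstar i) ^ 2 with hS
  have hS0 : 0 ≤ S := Finset.sum_nonneg fun i _ => sq_nonneg _
  have hΔ : Δd * (q - m ^ 2) = γstar ^ 2 * S / d := by
    rw [← hfix, hα]; field_simp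
  have hsqrt : Real.sqrt (Δd * (q - m ^ 2) * S / d) = γstar * S / d := by
    rw [hΔ]
    have : γstar ^ 2 * S / d * S / d = (γstar * S / d) ^ 2 := by
      field_simp
    rw [this, Real.sqrt_sq (by positivity)]
  have huh : ∑ i, u γstar i * h i = (∑ i, u γstar i * deriv tl (u γstar i)) + γstar * S := by
    rw [hS, Finset.mul_sum, ← Finset.sum_add_distrib]
    refine Finset.sum_congr rfl fun i _ => ?_
    rw [← hu γstar hγstar i]; ring
  rw [hsqrt, huh, Finset.sum_sub_distrib]
  field_simp
  ring
end

section
/- Fix Δ > 0 and α > 0, and take ρ = 1/2 (so the bias b = 0). For λ > 0 define γ(λ) = (Δ(1−α) − λ + √((Δ(1−α) − λ)² + 4λΔ))/(2λ), m(λ) = αγ(λ)/(Δ(1+γ(λ)) + αγ(λ)), and q(λ) = [ (αγ(λ)²/Δ)(1 − m(λ))² + (1+γ(λ))² m(λ)² ] / [ (1+γ(λ))² − αγ(λ)² ] (the explicit solution of the square-loss fixed-point equations at ρ = 1/2). Then, as λ → ∞: λγ(λ) → Δ, λ m(λ) → α, λ² q(λ) → α(Δ+α), and consequently m(λ)/√(q(λ))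 → √(α/(Δ+α)). Since the generalization error at ρ = 1/2 equals Q(m/√(Δq)) and the Bayes-optimal error equals Q(√(α/(Δ(Δ+α)))), the ridge-regularized square loss achieves the Bayes-optimal generalization error in the limit λ → ∞. -/
open Real Filter

open Real Filter MeasureTheory

lemma integrable_gauss2 : Integrable (fun t : ℝ => Real.exp (-t ^ 2 / 2)) := by
  have h := integrable_exp_neg_mul_sq (show (0:ℝ) < 1/2 by norm_num)
  have e : (fun t : ℝ => Real.exp (-t ^ 2 / 2)) = fun t : ℝ => Real.exp (-(1/2) * t ^ 2) := by
    funext t; ring_nf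
  rw [e]; exact h

lemma continuous_gaussQ : Continuous gaussQ := by
  unfold gaussQ
  refine continuous_const.mul ?_
  have hint := integrable_gauss2
  have key : ∀ x : ℝ, (∫ t in Set.Ioi x, Real.exp (-t ^ 2 / 2)) =
      (∫ t : ℝ, Real.exp (-t ^ 2 / 2)) -
        ((∫ t in Set.Iic (0:ℝ), Real.exp (-t ^ 2 / 2)) + ∫ t in (0:ℝ)..x, Real.exp (-t ^ 2 / 2)) := by
    intro x
    have h1 := intervalIntegral.integral_Iic_add_Ioi (b := x)
      (f := fun t : ℝ => Real.exp (-t ^ 2 / 2)) (μ := volume)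
      hint.integrableOn hint.integrableOn
    have h2 := intervalIntegral.integral_Iic_sub_Iic (a := (0:ℝ)) (b := x)
      (f := fun t : ℝ => Real.exp (-t ^ 2 / 2)) (μ := volume)
      hint.integrableOn hint.integrableOn
    linarith
  simp only [key]
  exact continuous_const.sub (continuous_const.add (hint.continuous_primitive 0))

/-- At `ρ = 1/2`, the ridge-regularized square loss achieves the
Bayes-optimal generalization error in the limit `λ → ∞`. -/
theorem stmt19
    (Δ α : ℝ) (hΔ : 0 < Δ) (hα : 0 < α)
    (γ m q : ℝ → ℝ)
    (hγ : ∀ lam, 0 < lam → γ lam =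
      (Δ * (1 - α) - lam + Real.sqrt ((Δ * (1 - α) - lam) ^ 2 + 4 * lam * Δ)) / (2 * lam))
    (hm : ∀ lam, 0 < lam → m lam = α * γ lam / (Δ * (1 + γ lam) + α * γ lam))
    (hq : ∀ lam, 0 < lam → q lam =
      ((α * (γ lam) ^ 2 / Δ) * (1 - m lam) ^ 2 + (1 + γ lam) ^ 2 * (m lam) ^ 2)
        / ((1 + γ lam) ^ 2 - α * (γ lam) ^ 2)) :
    Tendsto (fun lam => lam * γ lam) atTop (nhds Δ) ∧
    Tendsto (fun lam => lam * m lam) atTop (nhds α) ∧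
    Tendsto (fun lam => lam ^ 2 * q lam) atTop (nhds (α * (Δ + α))) ∧
    Tendsto (fun lam => m lam / Real.sqrt (q lam)) atTop (nhds (Real.sqrt (α / (Δ + α)))) ∧
    Tendsto (fun lam => gaussQ (m lam / Real.sqrt (Δ * q lam))) atTop
      (nhds (gaussQ (Real.sqrt (α / (Δ * (Δ + α)))))) := by
  set c : ℝ := Δ * (1 - α) with hc_def
  -- basic small limits
  have hinv : Tendsto (fun lam : ℝ => lam⁻¹) atTop (nhds 0) := tendsto_inv_atTop_zero
  have hcl : Tendsto (fun lam : ℝ => c / lam) atTop (nhds 0) :=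
    tendsto_const_nhds.div_atTop tendsto_id
  have hdl : Tendsto (fun lam : ℝ => 4 * Δ / lam) atTop (nhds 0) :=
    tendsto_const_nhds.div_atTop tendsto_id
  -- Step A : lam * γ lam → Δ
  have hsqrt1 : Tendsto (fun lam : ℝ => Real.sqrt ((c / lam - 1) ^ 2 + 4 * Δ / lam))
      atTop (nhds 1) := by
    have h1 : Tendsto (fun lam : ℝ => (c / lam - 1) ^ 2 + 4 * Δ / lam) atTop
        (nhds ((0 - 1) ^ 2 + 0)) := ((hcl.sub tendsto_const_nhds).pow 2).add hdl
    have h2 := (Real.continuous_sqrt.tendsto _).comp h1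
    simpa [Function.comp_def] using h2
  have hden2 : Tendsto (fun lam : ℝ => Real.sqrt ((c / lam - 1) ^ 2 + 4 * Δ / lam) + 1 - c / lam)
      atTop (nhds 2) := by
    have h := (hsqrt1.add_const 1).sub hcl
    norm_num at h
    exact h
  have hA : Tendsto (fun lam => lam * γ lam) atTop (nhds Δ) := by
    have hg : Tendsto (fun lam : ℝ => 2 * Δ /
        (Real.sqrt ((c / lam - 1) ^ 2 + 4 * Δ / lam) + 1 - c / lam)) atTop (nhds (2 * Δ / 2)) :=
      tendsto_const_nhds.div hden2 two_ne_zero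
    have h2 : (2 * Δ / 2 : ℝ) = Δ := by ring
    rw [h2] at hg
    refine hg.congr' ?_
    filter_upwards [eventually_gt_atTop (max 0 c)] with lam hlam
    have hl0 : 0 < lam := lt_of_le_of_lt (le_max_left _ _) hlam
    have hlc : c < lam := lt_of_le_of_lt (le_max_right _ _) hlam
    have hlne : lam ≠ 0 := ne_of_gt hl0
    have hS : 0 < (c - lam) ^ 2 + 4 * lam * Δ := by positivity
    set s : ℝ := Real.sqrt ((c - lam) ^ 2 + 4 * lam * Δ) with hs_def
    have hs0 : 0 ≤ s := Real.sqrt_nonneg _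
    have hsq : s ^ 2 = (c - lam) ^ 2 + 4 * lam * Δ := Real.sq_sqrt hS.le
    have hsl : Real.sqrt ((c / lam - 1) ^ 2 + 4 * Δ / lam) = s / lam := by
      rw [show (c / lam - 1) ^ 2 + 4 * Δ / lam = ((c - lam) ^ 2 + 4 * lam * Δ) / lam ^ 2 by
        field_simp]
      rw [Real.sqrt_div hS.le, Real.sqrt_sq hl0.le]
    have hrepr : s / lam + 1 - c / lam = (s + lam - c) / lam := by field_simp
    have hdenpos : 0 < s / lam + 1 - c / lam := by
      rw [hrepr]; exact div_pos (by linarith) hl0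
    have e1 : lam * ((c - lam + s) / (2 * lam)) = (c - lam + s) / 2 := by
      field_simp
    have e2 : (c - lam + s) * (s + lam - c) = 4 * lam * Δ := by
      linear_combination hsq
    have e3 : (c - lam + s) / 2 = 2 * Δ / (s / lam + 1 - c / lam) := by
      rw [div_eq_div_iff two_ne_zero hdenpos.ne', hrepr,
        show (c - lam + s) * ((s + lam - c) / lam) = ((c - lam + s) * (s + lam - c)) / lam from
          (mul_div_assoc _ _ _).symm, e2]
      field_simp; ring
    rw [hsl, hγ lam hl0, ← hs_def, e1]
    exact e3.symm
  -- γ → 0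
  have hγ0 : Tendsto γ atTop (nhds 0) := by
    have h := hA.mul hinv
    rw [show Δ * 0 = (0:ℝ) by ring] at h
    refine h.congr' ?_
    filter_upwards [eventually_gt_atTop (0:ℝ)] with lam hl0
    have hne := hl0.ne'
    field_simp
  -- Step B : lam * m lam → α
  have hdenm : Tendsto (fun lam : ℝ => Δ * (1 + γ lam) + α * γ lam) atTop (nhds Δ) := by
    have h : Tendsto (fun lam : ℝ => Δ * (1 + γ lam) + α * γ lam) atTop
        (nhds (Δ * (1 + 0) + α * 0)) :=
      (tendsto_const_nhds.mul (tendsto_const_nhds.add hγ0)).add (tendsto_const_nhds.mul hγ0)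
    simpa using h
  have hB : Tendsto (fun lam => lam * m lam) atTop (nhds α) := by
    have hg : Tendsto (fun lam : ℝ => α * (lam * γ lam) / (Δ * (1 + γ lam) + α * γ lam)) atTop
        (nhds (α * Δ / Δ)) := (tendsto_const_nhds.mul hA).div hdenm hΔ.ne'
    rw [show α * Δ / Δ = α by field_simp] at hg
    refine hg.congr' ?_
    filter_upwards [eventually_gt_atTop (0:ℝ)] with lam hl0
    rw [hm lam hl0]; ring
  -- m → 0
  have hm0 : Tendsto m atTop (nhds 0) := by
    have h := hB.mul hinv
    rw [show α * 0 = (0:ℝ) by ring] at h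
    refine h.congr' ?_
    filter_upwards [eventually_gt_atTop (0:ℝ)] with lam hl0
    have hne := hl0.ne'
    field_simp
  -- Step C : lam^2 * q lam → α(Δ+α)
  have hC : Tendsto (fun lam => lam ^ 2 * q lam) atTop (nhds (α * (Δ + α))) := by
    have hnum : Tendsto (fun lam : ℝ =>
        (α * (lam * γ lam) ^ 2 / Δ) * (1 - m lam) ^ 2 + (1 + γ lam) ^ 2 * (lam * m lam) ^ 2)
        atTop (nhds ((α * Δ ^ 2 / Δ) * (1 - 0) ^ 2 + (1 + 0) ^ 2 * α ^ 2)) :=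
      ((((tendsto_const_nhds.mul (hA.pow 2)).div tendsto_const_nhds hΔ.ne').mul
        ((tendsto_const_nhds.sub hm0).pow 2)).add
        (((tendsto_const_nhds.add hγ0).pow 2).mul (hB.pow 2)))
    have hden : Tendsto (fun lam : ℝ => (1 + γ lam) ^ 2 - α * (γ lam) ^ 2) atTop
        (nhds ((1 + 0) ^ 2 - α * 0 ^ 2)) :=
      ((tendsto_const_nhds.add hγ0).pow 2).sub (tendsto_const_nhds.mul (hγ0.pow 2))
    have hg : Tendsto (fun lam : ℝ =>
        ((α * (lam * γ lam) ^ 2 / Δ) * (1 - m lam) ^ 2 + (1 + γ lam) ^ 2 * (lam * m lam) ^ 2)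
          / ((1 + γ lam) ^ 2 - α * (γ lam) ^ 2)) atTop
        (nhds (((α * Δ ^ 2 / Δ) * (1 - 0) ^ 2 + (1 + 0) ^ 2 * α ^ 2)
          / ((1 + 0) ^ 2 - α * (0:ℝ) ^ 2))) := hnum.div hden (by norm_num)
    have hval : ((α * Δ ^ 2 / Δ) * (1 - 0) ^ 2 + (1 + 0) ^ 2 * α ^ 2) /
        ((1 + 0) ^ 2 - α * (0:ℝ) ^ 2) = α * (Δ + α) := by
      field_simp; ring
    rw [hval] at hg
    refine hg.congr' ?_
    filter_upwards [eventually_gt_atTop (0:ℝ)] with lam hl0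
    rw [hq lam hl0]; ring
  -- Step D : m / √q
  have hq_sqrt : Tendsto (fun lam : ℝ => Real.sqrt (lam ^ 2 * q lam)) atTop
      (nhds (Real.sqrt (α * (Δ + α)))) := (Real.continuous_sqrt.tendsto _).comp hC
  have hpos : (0:ℝ) < α * (Δ + α) := by positivity
  have hD : Tendsto (fun lam => m lam / Real.sqrt (q lam)) atTop
      (nhds (Real.sqrt (α / (Δ + α)))) := by
    have hg : Tendsto (fun lam : ℝ => (lam * m lam) / Real.sqrt (lam ^ 2 * q lam)) atTop
        (nhds (α / Real.sqrt (α * (Δ + α)))) :=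
      hB.div hq_sqrt (Real.sqrt_ne_zero'.2 hpos)
    have hval : α / Real.sqrt (α * (Δ + α)) = Real.sqrt (α / (Δ + α)) := by
      rw [show α / (Δ + α) = α ^ 2 / (α * (Δ + α)) by field_simp,
        Real.sqrt_div (sq_nonneg α), Real.sqrt_sq hα.le]
    rw [hval] at hg
    refine hg.congr' ?_
    filter_upwards [eventually_gt_atTop (0:ℝ)] with lam hl0
    rw [Real.sqrt_mul (sq_nonneg lam), Real.sqrt_sq hl0.le,
      mul_div_mul_left _ _ (ne_of_gt hl0)]
  -- Step E : gaussQ limit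
  have hE : Tendsto (fun lam => gaussQ (m lam / Real.sqrt (Δ * q lam))) atTop
      (nhds (gaussQ (Real.sqrt (α / (Δ * (Δ + α)))))) := by
    have hpos2 : (0:ℝ) < Δ * (α * (Δ + α)) := by positivity
    have hq_sqrt2 : Tendsto (fun lam : ℝ => Real.sqrt (Δ * (lam ^ 2 * q lam))) atTop
        (nhds (Real.sqrt (Δ * (α * (Δ + α))))) :=
      (Real.continuous_sqrt.tendsto _).comp (tendsto_const_nhds.mul hC)
    have hg : Tendsto (fun lam : ℝ => (lam * m lam) / Real.sqrt (Δ * (lam ^ 2 * q lam))) atTop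
        (nhds (α / Real.sqrt (Δ * (α * (Δ + α))))) :=
      hB.div hq_sqrt2 (Real.sqrt_ne_zero'.2 hpos2)
    have hval : α / Real.sqrt (Δ * (α * (Δ + α))) = Real.sqrt (α / (Δ * (Δ + α))) := by
      rw [show α / (Δ * (Δ + α)) = α ^ 2 / (Δ * (α * (Δ + α))) by field_simp,
        Real.sqrt_div (sq_nonneg α), Real.sqrt_sq hα.le]
    rw [hval] at hg
    have hg' : Tendsto (fun lam => m lam / Real.sqrt (Δ * q lam)) atTop
        (nhds (Real.sqrt (α / (Δ * (Δ + α))))) := by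
      refine hg.congr' ?_
      filter_upwards [eventually_gt_atTop (0:ℝ)] with lam hl0
      rw [show Δ * (lam ^ 2 * q lam) = lam ^ 2 * (Δ * q lam) by ring,
        Real.sqrt_mul (sq_nonneg lam), Real.sqrt_sq hl0.le,
        mul_div_mul_left _ _ (ne_of_gt hl0)]
    exact (continuous_gaussQ.tendsto _).comp hg'
  exact ⟨hA, hB, hC, hD, hE⟩
end
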